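/- Fix 0 < m < L with κ = L/m ≥ 2, and let δ ∈ (0, 1]. Then the function ℓ ↦ φ((1+δ)ℓ, ℓ, m) is strictly decreasing on the interval m ≤ ℓ ≤ L/(1+δ); on this interval it equals (L − ℓ + √((L − ℓ)δℓ)) / (L − m + √((L − m)((1+δ)ℓ − m))). -/

import Mathlib

/-- `β(s) = (√L − √s)/(√L + √s)`. -/
noncomputable def momBeta (L s : ℝ) : ℝ :=
  (Real.sqrt L - Real.sqrt s) / (Real.sqrt L + Real.sqrt s)

/-- The complex square root of a real number: `√x` if `x ≥ 0`, `i√(−x)` otherwise. -/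
noncomputable def csqrt (x : ℝ) : ℂ :=
  if 0 ≤ x then ((Real.sqrt x : ℝ) : ℂ) else Complex.I * ((Real.sqrt (-x) : ℝ) : ℂ)

/-- The discriminant `((1+β(s))²/4)(1 − ℓ/L)² − β(s)(1 − ℓ/L)`. -/
noncomputable def discr (L s ℓ : ℝ) : ℝ :=
  ((1 + momBeta L s) / 2) ^ 2 * (1 - ℓ / L) ^ 2 - momBeta L s * (1 - ℓ / L)

/-- The eigenvalue `((1+β(s))/2)(1 − ℓ/L) + sqrt(discriminant)` of `G(s, ℓ)`. -/
noncomputable def eigP (L s ℓ : ℝ) : ℂ :=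
  (((1 + momBeta L s) / 2 * (1 - ℓ / L) : ℝ) : ℂ) + csqrt (discr L s ℓ)

/-- The eigenvalue `((1+β(s))/2)(1 − ℓ/L) − sqrt(discriminant)` of `G(s, ℓ)`. -/
noncomputable def eigM (L s ℓ : ℝ) : ℂ :=
  (((1 + momBeta L s) / 2 * (1 - ℓ / L) : ℝ) : ℂ) - csqrt (discr L s ℓ)

/-- `ρ(s, ℓ)`: the maximum modulus of the two eigenvalues of `G(s, ℓ)`. -/
noncomputable def specRho (L s ℓ : ℝ) : ℝ :=
  max ‖eigP L s ℓ‖ ‖eigM L s ℓ‖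

/-- `φ(s, a, b) = min{1, ρ(s, a)/ρ(s, b)}` if `ρ(s, b) > 0`, and `1` otherwise. -/
noncomputable def phiRatio (L s a b : ℝ) : ℝ :=
  if 0 < specRho L s b then min 1 (specRho L s a / specRho L s b) else 1

/-!
For `0 ≤ ℓ ≤ s ≤ L` the discriminant equals `(L - ℓ)(s - ℓ)/(√L(√L + √s))²`, so both eigenvalues
are real and `ρ(s, ℓ) = (L - ℓ + √((L - ℓ)(s - ℓ)))/(√L(√L + √s))`; the common denominator cancels
in `φ((1 + δ)ℓ, ℓ, m)`, which gives the closed form. With `p = √(L - ℓ)`, `q = √(δℓ)`,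
`c = √(L - m)` and `r = √((1 + δ)ℓ - m)` the closed form is `(p/c) · (p + q)/(c + r)`, a strictly
decreasing factor times a nonincreasing one.
-/

open Real Set

lemma csqrt_of_nonneg {x : ℝ} (hx : 0 ≤ x) : csqrt x = (√x : ℂ) := if_pos hx

lemma specRho_eq_of_nonneg {L s ℓ : ℝ} (hA : 0 ≤ (1 + momBeta L s) / 2 * (1 - ℓ / L))
    (hD : 0 ≤ discr L s ℓ) :
    specRho L s ℓ = (1 + momBeta L s) / 2 * (1 - ℓ / L) + √(discr L s ℓ) := by
  set A := (1 + momBeta L s) / 2 * (1 - ℓ / L)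
  have hP : ‖eigP L s ℓ‖ = A + √(discr L s ℓ) := by
    rw [eigP, csqrt_of_nonneg hD, ← Complex.ofReal_add, Complex.norm_real,
      Real.norm_of_nonneg (by positivity)]
  have hM : ‖eigM L s ℓ‖ = |A - √(discr L s ℓ)| := by
    rw [eigM, csqrt_of_nonneg hD, ← Complex.ofReal_sub, Complex.norm_real, Real.norm_eq_abs]
  rw [specRho, hP, hM, max_eq_left]
  calc |A - √(discr L s ℓ)| ≤ |A| + |√(discr L s ℓ)| := abs_sub _ _
    _ = A + √(discr L s ℓ) := by rw [abs_of_nonneg hA, abs_of_nonneg (sqrt_nonneg _)]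

lemma one_add_momBeta_div_two_mul {L s ℓ : ℝ} (hL : 0 < L) :
    (1 + momBeta L s) / 2 * (1 - ℓ / L) = (L - ℓ) / (√L * (√L + √s)) := by
  obtain ⟨u, hu, rfl⟩ : ∃ u, 0 < u ∧ u ^ 2 = L := ⟨√L, sqrt_pos.2 hL, sq_sqrt hL.le⟩
  have hv : 0 ≤ √s := sqrt_nonneg s
  rw [momBeta, sqrt_sq hu.le]
  field_simp
  ring

lemma discr_eq {L s ℓ : ℝ} (hL : 0 < L) (hs : 0 ≤ s) :
    discr L s ℓ = (L - ℓ) * (s - ℓ) / (√L * (√L + √s)) ^ 2 := by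
  obtain ⟨u, hu, rfl⟩ : ∃ u, 0 < u ∧ u ^ 2 = L := ⟨√L, sqrt_pos.2 hL, sq_sqrt hL.le⟩
  obtain ⟨v, hv, rfl⟩ : ∃ v, 0 ≤ v ∧ v ^ 2 = s := ⟨√s, sqrt_nonneg s, sq_sqrt hs⟩
  rw [discr, momBeta, sqrt_sq hu.le, sqrt_sq hv]
  field_simp
  ring

lemma specRho_eq {L s ℓ : ℝ} (hL : 0 < L) (hℓ : 0 ≤ ℓ) (hℓs : ℓ ≤ s) (hsL : s ≤ L) :
    specRho L s ℓ = (L - ℓ + √((L - ℓ) * (s - ℓ))) / (√L * (√L + √s)) := by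
  have hs : 0 ≤ s := hℓ.trans hℓs
  have hK : 0 < √L * (√L + √s) := by have := sqrt_pos.2 hL; positivity
  have hprod : 0 ≤ (L - ℓ) * (s - ℓ) := mul_nonneg (by linarith) (by linarith)
  rw [specRho_eq_of_nonneg, one_add_momBeta_div_two_mul hL, discr_eq hL hs, sqrt_div hprod,
    sqrt_sq hK.le, add_div]
  · rw [one_add_momBeta_div_two_mul hL]
    exact div_nonneg (by linarith) hK.le
  · rw [discr_eq hL hs]
    positivity

lemma phiRatio_eq {L m δ ℓ : ℝ} (hm : 0 ≤ m) (hmL : m < L) (hδ : 0 ≤ δ) (hmℓ : m ≤ ℓ)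
    (hℓL : (1 + δ) * ℓ ≤ L) :
    phiRatio L ((1 + δ) * ℓ) ℓ m =
      (L - ℓ + √((L - ℓ) * (δ * ℓ))) / (L - m + √((L - m) * ((1 + δ) * ℓ - m))) := by
  have hL : 0 < L := hm.trans_lt hmL
  have hℓs : ℓ ≤ (1 + δ) * ℓ := by nlinarith
  have hK : 0 < √L * (√L + √((1 + δ) * ℓ)) := by have := sqrt_pos.2 hL; positivity
  have hden : 0 < L - m + √((L - m) * ((1 + δ) * ℓ - m)) :=
    add_pos_of_pos_of_nonneg (by linarith) (sqrt_nonneg _)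
  have hnum_le : L - ℓ + √((L - ℓ) * (δ * ℓ)) ≤ L - m + √((L - m) * ((1 + δ) * ℓ - m)) :=
    add_le_add (by linarith) <| sqrt_le_sqrt <|
      mul_le_mul (by linarith) (by linarith) (mul_nonneg hδ (hm.trans hmℓ)) (by linarith)
  have hρm := specRho_eq hL hm (hmℓ.trans hℓs) hℓL
  have hρℓ := specRho_eq hL (hm.trans hmℓ) hℓs hℓL
  rw [show (1 + δ) * ℓ - ℓ = δ * ℓ by ring] at hρℓ
  rw [phiRatio, if_pos (by rw [hρm]; exact div_pos hden hK), hρm, hρℓ,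
    div_div_div_cancel_right₀ hK.ne', min_eq_right ((div_le_one hden).2 hnum_le)]

lemma add_sqrt_mul_eq {x : ℝ} (hx : 0 ≤ x) (y : ℝ) : x + √(x * y) = √x * (√x + √y) := by
  rw [sqrt_mul hx, mul_add, mul_self_sqrt hx]

/-- After squaring this follows from `√((L - m)δ) · √((L - b)((1 + δ)a - m)) ≤ √a ((1 + δ)L - m)`
and `(L - a)((1 + δ)b - m) - (L - b)((1 + δ)a - m) = (b - a)((1 + δ)L - m)`. -/
lemma sqrt_mul_sub_add_sqrt_le {L m δ a b : ℝ} (hδ : 0 ≤ δ) (hm : 0 ≤ m) (hma : m ≤ a)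
    (hab : a ≤ b) (hbL : b ≤ L) :
    √((L - m) * δ) * (√b - √a) + √((L - b) * ((1 + δ) * a - m)) ≤
      √((L - a) * ((1 + δ) * b - m)) := by
  set k := √((L - m) * δ)
  set Y := √((L - b) * ((1 + δ) * a - m))
  set T := (1 + δ) * L - m
  have ha : 0 ≤ a := hm.trans hma
  have hmL : m ≤ L := hma.trans (hab.trans hbL)
  have hT : (L - m) * δ ≤ T := by nlinarith [mul_nonneg hδ hm]
  have hk2 : k ^ 2 = (L - m) * δ := sq_sqrt (mul_nonneg (by linarith) hδ)
  have hY2 : Y ^ 2 = (L - b) * ((1 + δ) * a - m) :=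
    sq_sqrt (mul_nonneg (by linarith) (by nlinarith))
  have ha2 : √a ^ 2 = a := sq_sqrt ha
  have hb2 : √b ^ 2 = b := sq_sqrt (ha.trans hab)
  have hαβ : √a ≤ √b := sqrt_le_sqrt hab
  have hkY : k * Y ≤ √a * T := by
    rw [← sqrt_mul (mul_nonneg (by linarith) hδ),
      sqrt_le_left (mul_nonneg (sqrt_nonneg a) (by nlinarith)), mul_pow, ha2]
    calc (L - m) * δ * ((L - b) * ((1 + δ) * a - m))
        ≤ (L - m) * δ * ((L - m) * ((1 + δ) * a)) := by gcongr <;> nlinarith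
      _ ≤ a * ((1 + δ) * (L - m)) ^ 2 := by nlinarith [mul_nonneg ha (sq_nonneg (L - m))]
      _ ≤ a * T ^ 2 := by gcongr; nlinarith
  have hgap : (L - a) * ((1 + δ) * b - m) - (k * (√b - √a) + Y) ^ 2 =
      (√b - √a) ^ 2 * (T - (L - m) * δ) + 2 * (√b - √a) * (√a * T - k * Y) := by
    linear_combination (-(√b - √a) ^ 2) * hk2 - hY2 - T * hb2 + T * ha2
  apply le_sqrt_of_sq_le
  nlinarith [mul_nonneg (sq_nonneg (√b - √a)) (by linarith : 0 ≤ T - (L - m) * δ),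
    mul_nonneg (sub_nonneg.2 hαβ) (sub_nonneg.2 hkY)]

lemma add_sqrt_mul_add_sqrt_le {L m δ a b : ℝ} (hδ : 0 ≤ δ) (hm : 0 ≤ m) (hma : m ≤ a)
    (hab : a ≤ b) (hbL : b ≤ L) :
    (√(L - b) + √(δ * b)) * (√(L - m) + √((1 + δ) * a - m)) ≤
      (√(L - a) + √(δ * a)) * (√(L - m) + √((1 + δ) * b - m)) := by
  have ha : 0 ≤ a := hm.trans hma
  have hp : √(L - b) ≤ √(L - a) := sqrt_le_sqrt (by linarith)
  have hqr : √(δ * b) * √((1 + δ) * a - m) ≤ √(δ * a) * √((1 + δ) * b - m) := by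
    rw [← sqrt_mul (mul_nonneg hδ (ha.trans hab)), ← sqrt_mul (mul_nonneg hδ ha)]
    exact sqrt_le_sqrt (by nlinarith [mul_nonneg hδ hm])
  have hkey := sqrt_mul_sub_add_sqrt_le hδ hm hma hab hbL
  rw [sqrt_mul (by linarith), sqrt_mul (by linarith) ((1 + δ) * b - m),
    sqrt_mul (by linarith)] at hkey
  rw [sqrt_mul hδ, sqrt_mul hδ] at hqr ⊢
  nlinarith [mul_le_mul_of_nonneg_right hp (sqrt_nonneg (L - m))]

lemma strictAntiOn_phi_closedForm {L m δ : ℝ} (hm : 0 ≤ m) (hmL : m < L) (hδ : 0 ≤ δ) :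
    StrictAntiOn (fun ℓ => (L - ℓ + √((L - ℓ) * (δ * ℓ))) /
      (L - m + √((L - m) * ((1 + δ) * ℓ - m)))) (Icc m L) := by
  intro a ⟨hma, _⟩ b ⟨_, hbL⟩ hab
  have hc : 0 < √(L - m) := sqrt_pos.2 (by linarith)
  have hp : √(L - b) < √(L - a) := sqrt_lt_sqrt (by linarith) (by linarith)
  have hcross := add_sqrt_mul_add_sqrt_le hδ hm hma hab.le hbL
  dsimp only
  rw [add_sqrt_mul_eq (by linarith : 0 ≤ L - a), add_sqrt_mul_eq (by linarith : 0 ≤ L - b),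
    add_sqrt_mul_eq (by linarith : 0 ≤ L - m), add_sqrt_mul_eq (by linarith : 0 ≤ L - m),
    div_lt_div_iff₀ (by positivity) (by positivity)]
  have hpos : 0 < (√(L - a) + √(δ * a)) * (√(L - m) + √((1 + δ) * b - m)) :=
    mul_pos (add_pos_of_pos_of_nonneg (hp.trans_le' (sqrt_nonneg _)) (sqrt_nonneg _))
      (add_pos_of_pos_of_nonneg hc (sqrt_nonneg _))
  calc √(L - b) * (√(L - b) + √(δ * b)) * (√(L - m) * (√(L - m) + √((1 + δ) * a - m)))
      = √(L - m) * (√(L - b) * ((√(L - b) + √(δ * b)) * (√(L - m) + √((1 + δ) * a - m)))) := by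
        ring
    _ < √(L - m) * (√(L - a) * ((√(L - a) + √(δ * a)) * (√(L - m) + √((1 + δ) * b - m)))) := by
        refine mul_lt_mul_of_pos_left ?_ hc
        exact (mul_le_mul_of_nonneg_left hcross (sqrt_nonneg _)).trans_lt
          (mul_lt_mul_of_pos_right hp hpos)
    _ = √(L - a) * (√(L - a) + √(δ * a)) * (√(L - m) * (√(L - m) + √((1 + δ) * b - m))) := by
        ring

theorem stmt17_general {L m δ : ℝ} (hm : 0 < m) (hmL : m < L)
    (hδ0 : 0 < δ) :
    StrictAntiOn (fun ℓ : ℝ => phiRatio L ((1 + δ) * ℓ) ℓ m)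
      (Set.Icc m (L / (1 + δ))) ∧
    ∀ ℓ ∈ Set.Icc m (L / (1 + δ)),
      phiRatio L ((1 + δ) * ℓ) ℓ m =
        (L - ℓ + Real.sqrt ((L - ℓ) * (δ * ℓ))) /
          (L - m + Real.sqrt ((L - m) * ((1 + δ) * ℓ - m))) := by
  have h1δ : 0 < 1 + δ := by linarith
  have hformula : ∀ ℓ ∈ Icc m (L / (1 + δ)), phiRatio L ((1 + δ) * ℓ) ℓ m =
      (L - ℓ + √((L - ℓ) * (δ * ℓ))) / (L - m + √((L - m) * ((1 + δ) * ℓ - m))) :=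
    fun ℓ ⟨hmℓ, hℓL⟩ => phiRatio_eq hm.le hmL hδ0.le hmℓ (by rwa [le_div_iff₀' h1δ] at hℓL)
  have hsub : Icc m (L / (1 + δ)) ⊆ Icc m L := Icc_subset_Icc_right <|
    div_le_self (hm.trans hmL).le (by linarith)
  exact ⟨((strictAntiOn_phi_closedForm hm.le hmL hδ0.le).mono hsub).congr
    fun ℓ hℓ => (hformula ℓ hℓ).symm, hformula⟩

/-- (Lemma `la:lem:phi-decreasing`.) For `0 < m < L` with
`κ = L/m ≥ 2` and `δ ∈ (0, 1]`, the map `ℓ ↦ φ((1+δ)ℓ, ℓ, m)` is strictly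
decreasing on `[m, L/(1+δ)]`, where it equals
`(L − ℓ + √((L − ℓ)δℓ))/(L − m + √((L − m)((1+δ)ℓ − m)))`. -/
theorem stmt17 {L m δ : ℝ} (hm : 0 < m) (hmL : m < L) (hκ : 2 ≤ L / m)
    (hδ0 : 0 < δ) (hδ1 : δ ≤ 1) :
    StrictAntiOn (fun ℓ : ℝ => phiRatio L ((1 + δ) * ℓ) ℓ m)
      (Set.Icc m (L / (1 + δ))) ∧
    ∀ ℓ ∈ Set.Icc m (L / (1 + δ)),
      phiRatio L ((1 + δ) * ℓ) ℓ m =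
        (L - ℓ + Real.sqrt ((L - ℓ) * (δ * ℓ))) /
          (L - m + Real.sqrt ((L - m) * ((1 + δ) * ℓ - m))) :=
  stmt17_general hm hmL hδ0
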